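/- arXiv:2408.01409 — 2 statements merged into one kernel-verified Lean document; each statement's English description precedes it below -/
import Mathlib

section
/- Let A ∈ ℝ^{d×d}, h > 0, u_0 ∈ ℝ^d, and let (w(t), w̄(t)) solve the deterministic Euler dynamics with initial value u_0. Then for every t ≥ 0: ‖w'(t) − A w(t)‖ ≤ √2 · h · ‖exp(tB)‖ · ‖A‖² · ‖u_0‖, where w'(t) = A w̄(t) and ‖exp(tB)‖, ‖A‖ are operator norms. -/
/-!
Since `B` commutes with `exp(tB)`,
`B (w, w̄) = exp(tB) B (u₀, u₀) = exp(tB) (A u₀, 0)`. The lower block of the left side is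
`(w − w̄)/h`, so `w̄ − w = −h · [exp(tB) (A u₀, 0)]₂` and `A w̄ − A w` is bounded by
`h ‖A‖ ‖exp(tB)‖ ‖A‖ ‖u₀‖`; the factor `√2 ≥ 1` only weakens this.
-/

open Matrix

/-- The block matrix `B = [[0, A], [h⁻¹ I, −h⁻¹ I]]` of the deterministic Euler dynamics. -/
noncomputable def eulerBlock {d : ℕ} (A : Matrix (Fin d) (Fin d) ℝ) (h : ℝ) :
    Matrix (Fin d ⊕ Fin d) (Fin d ⊕ Fin d) ℝ :=
  Matrix.fromBlocks 0 A (h⁻¹ • 1) (-(h⁻¹ • (1 : Matrix (Fin d) (Fin d) ℝ)))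

/-- The Euclidean norm of a vector in `ℝ^n`. -/
noncomputable def eucNorm {n : Type*} [Fintype n] (x : n → ℝ) : ℝ :=
  ‖(WithLp.equiv 2 (n → ℝ)).symm x‖

/-- The operator norm (w.r.t. Euclidean norms) of a real square matrix. -/
noncomputable def matOpNorm {n : Type*} [Fintype n] [DecidableEq n] (M : Matrix n n ℝ) : ℝ :=
  ‖Matrix.toEuclideanCLM (𝕜 := ℝ) M‖

/-- The full pair `(w(t), w̄(t)) = exp(tB)(u₀, u₀)ᵀ` of the deterministic Euler dynamics. -/
noncomputable def detEulerPair {d : ℕ} (A : Matrix (Fin d) (Fin d) ℝ) (h : ℝ)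
    (u0 : Fin d → ℝ) (t : ℝ) : (Fin d ⊕ Fin d) → ℝ :=
  (NormedSpace.exp (t • eulerBlock A h)).mulVec (Sum.elim u0 u0)

/-- The first component `w(t)` of the deterministic Euler dynamics. -/
noncomputable def detEulerW {d : ℕ} (A : Matrix (Fin d) (Fin d) ℝ) (h : ℝ)
    (u0 : Fin d → ℝ) (t : ℝ) : Fin d → ℝ :=
  fun i => detEulerPair A h u0 t (Sum.inl i)

/-- The companion process `w̄(t)` of the deterministic Euler dynamics. -/
noncomputable def detEulerWbar {d : ℕ} (A : Matrix (Fin d) (Fin d) ℝ) (h : ℝ)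
    (u0 : Fin d → ℝ) (t : ℝ) : Fin d → ℝ :=
  fun i => detEulerPair A h u0 t (Sum.inr i)

section EuclideanNorm

variable {m n : Type*} [Fintype m] [Fintype n]

lemma eucNorm_nonneg (x : n → ℝ) : 0 ≤ eucNorm x :=
  norm_nonneg _

lemma eucNorm_eq_sqrt (x : n → ℝ) : eucNorm x = √(∑ i, x i ^ 2) := by
  simp only [eucNorm, EuclideanSpace.norm_eq, Real.norm_eq_abs, sq_abs]
  rfl

lemma eucNorm_smul (c : ℝ) (x : n → ℝ) : eucNorm (c • x) = |c| * eucNorm x :=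
  norm_smul c ((WithLp.equiv 2 (n → ℝ)).symm x)

lemma matOpNorm_nonneg [DecidableEq n] (M : Matrix n n ℝ) : 0 ≤ matOpNorm M :=
  norm_nonneg _

lemma eucNorm_mulVec_le [DecidableEq n] (M : Matrix n n ℝ) (x : n → ℝ) :
    eucNorm (M *ᵥ x) ≤ matOpNorm M * eucNorm x :=
  (Matrix.toEuclideanCLM (𝕜 := ℝ) M).le_opNorm _

lemma eucNorm_sumElim (x : m → ℝ) (y : n → ℝ) :
    eucNorm (Sum.elim x y) = √(eucNorm x ^ 2 + eucNorm y ^ 2) := by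
  simp only [eucNorm_eq_sqrt, Fintype.sum_sum_type, Sum.elim_inl, Sum.elim_inr]
  rw [Real.sq_sqrt (by positivity), Real.sq_sqrt (by positivity)]

lemma eucNorm_sumElim_zero (x : m → ℝ) : eucNorm (Sum.elim x (0 : n → ℝ)) = eucNorm x := by
  have : eucNorm (0 : n → ℝ) = 0 := by simpa using eucNorm_smul 0 (0 : n → ℝ)
  rw [eucNorm_sumElim, this, zero_pow two_ne_zero, add_zero, Real.sqrt_sq (eucNorm_nonneg x)]

lemma eucNorm_comp_inr_le (y : m ⊕ n → ℝ) : eucNorm (y ∘ Sum.inr) ≤ eucNorm y := by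
  conv_rhs => rw [← Sum.elim_comp_inl_inr y, eucNorm_sumElim]
  exact Real.le_sqrt_of_sq_le (le_add_of_nonneg_left (sq_nonneg _))

end EuclideanNorm

section MatrixExp

attribute [local instance] Matrix.linftyOpNormedRing Matrix.linftyOpNormedAlgebra

lemma Matrix.commute_exp_smul {n : Type*} [Fintype n] [DecidableEq n] (M : Matrix n n ℝ) (t : ℝ) :
    Commute M (NormedSpace.exp (t • M)) :=
  ((Commute.refl M).smul_right t).exp_right

end MatrixExp

section EulerDynamics

variable {d : ℕ} (A : Matrix (Fin d) (Fin d) ℝ) (h : ℝ) (u0 : Fin d → ℝ) (t : ℝ)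

lemma eulerBlock_mulVec_sumElim (x y : Fin d → ℝ) :
    eulerBlock A h *ᵥ Sum.elim x y = Sum.elim (A *ᵥ y) (h⁻¹ • (x - y)) := by
  rw [eulerBlock, fromBlocks_mulVec]
  simp [Matrix.neg_mulVec, smul_mulVec, sub_eq_add_neg]

lemma detEulerPair_eq_sumElim :
    detEulerPair A h u0 t = Sum.elim (detEulerW A h u0 t) (detEulerWbar A h u0 t) := by
  funext i; cases i <;> rfl

lemma eulerBlock_mulVec_detEulerPair :
    eulerBlock A h *ᵥ detEulerPair A h u0 t
      = NormedSpace.exp (t • eulerBlock A h) *ᵥ Sum.elim (A *ᵥ u0) 0 := by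
  rw [detEulerPair, mulVec_mulVec, (eulerBlock A h).commute_exp_smul t |>.eq, ← mulVec_mulVec,
    eulerBlock_mulVec_sumElim, sub_self, smul_zero]

lemma detEulerWbar_sub_detEulerW (hh : h ≠ 0) :
    detEulerWbar A h u0 t - detEulerW A h u0 t
      = (-h) • ((NormedSpace.exp (t • eulerBlock A h) *ᵥ Sum.elim (A *ᵥ u0) 0) ∘ Sum.inr) := by
  have hinr := congrArg (· ∘ Sum.inr) (eulerBlock_mulVec_detEulerPair A h u0 t)
  simp only [detEulerPair_eq_sumElim, eulerBlock_mulVec_sumElim, Sum.elim_comp_inr] at hinr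
  rw [← hinr, smul_smul, neg_mul, mul_inv_cancel₀ hh, neg_smul, one_smul, neg_sub]

end EulerDynamics

/-- `‖w'(t) − A w(t)‖ ≤ √2 · h · ‖exp(tB)‖ · ‖A‖² · ‖u₀‖` for all `t ≥ 0`,
where `w'(t) = A w̄(t)`. -/
theorem stmt3 {d : ℕ} (A : Matrix (Fin d) (Fin d) ℝ) (h : ℝ) (hh : 0 < h)
    (u0 : Fin d → ℝ) :
    ∀ t : ℝ, 0 ≤ t →
      eucNorm (A.mulVec (detEulerWbar A h u0 t) - A.mulVec (detEulerW A h u0 t))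
        ≤ Real.sqrt 2 * h * matOpNorm (NormedSpace.exp (t • eulerBlock A h))
            * matOpNorm A ^ 2 * eucNorm u0 := by
  intro t _
  set E := NormedSpace.exp (t • eulerBlock A h)
  set v := E *ᵥ Sum.elim (A *ᵥ u0) 0
  have hv : eucNorm (A *ᵥ (v ∘ Sum.inr)) ≤ matOpNorm E * matOpNorm A ^ 2 * eucNorm u0 :=
    calc eucNorm (A *ᵥ (v ∘ Sum.inr))
        ≤ matOpNorm A * eucNorm (v ∘ Sum.inr) := eucNorm_mulVec_le A _
      _ ≤ matOpNorm A * (matOpNorm E * eucNorm (A *ᵥ u0)) := by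
          refine mul_le_mul_of_nonneg_left ((eucNorm_comp_inr_le v).trans ?_) (matOpNorm_nonneg A)
          simpa only [eucNorm_sumElim_zero] using eucNorm_mulVec_le E (Sum.elim (A *ᵥ u0) 0)
      _ ≤ matOpNorm A * (matOpNorm E * (matOpNorm A * eucNorm u0)) := by
          gcongr
          exacts [matOpNorm_nonneg A, matOpNorm_nonneg E, eucNorm_mulVec_le A u0]
      _ = matOpNorm E * matOpNorm A ^ 2 * eucNorm u0 := by ring
  rw [← mulVec_sub, detEulerWbar_sub_detEulerW A h u0 t hh.ne', mulVec_smul, eucNorm_smul,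
    abs_neg, abs_of_pos hh]
  calc h * eucNorm (A *ᵥ (v ∘ Sum.inr))
      ≤ 1 * h * (matOpNorm E * matOpNorm A ^ 2 * eucNorm u0) := by rw [one_mul]; gcongr
    _ ≤ √2 * h * (matOpNorm E * matOpNorm A ^ 2 * eucNorm u0) := by
        gcongr
        · exact mul_nonneg (mul_nonneg (matOpNorm_nonneg E) (sq_nonneg _)) (eucNorm_nonneg u0)
        · exact Real.one_le_sqrt.mpr one_le_two
    _ = √2 * h * matOpNorm E * matOpNorm A ^ 2 * eucNorm u0 := by ring
end

section
/- Let A ∈ ℝ^{d×d}, u_0 ∈ ℝ^d, and fix h > 0. Let (V(t))_{t≥0} be the stochastic Euler dynamics with stepsize parameter h for the linear ODE u' = Au, u(0) = u_0, and let K(t) be the associated Poisson counting process. Then for every k ∈ ℕ₀ there exists a constant C_k > 0 such that for all ε ∈ (0, 1): 𝔼[‖V(ε) − exp(εA)u_0‖² · 1{K(ε) = k}] ≤ C_k · ε⁴ · ℙ(K(ε) = k); i.e., the conditional local root mean square truncation error satisfies 𝔼[‖V(ε) − u(ε)‖² | K(ε) = k]^{1/2} = O(ε²) as ε ↓ 0.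 -/
set_option maxHeartbeats 1600000
set_option synthInstance.maxHeartbeats 400000

open MeasureTheory ProbabilityTheory
open scoped NNReal

/-- The jump times `T_k = H_1 + ⋯ + H_k` (here `H i` stands for `H_{i+1}`). -/
noncomputable def jumpTime {Ω : Type*} (H : ℕ → Ω → ℝ) (k : ℕ) (ω : Ω) : ℝ :=
  ∑ i ∈ Finset.range k, H i ω

/-- The counting process `K(t) = max {k : T_k ≤ t}`. -/
noncomputable def jumpCount {Ω : Type*} (H : ℕ → Ω → ℝ) (t : ℝ) (ω : Ω) : ℕ :=
  sSup {k | jumpTime H k ω ≤ t}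

/-- The random timestep Euler chain `V̂_0 = u₀`, `V̂_k = V̂_{k−1} + H_k f(V̂_{k−1})`. -/
noncomputable def eulerChain {Ω E : Type*} [AddCommGroup E] [Module ℝ E]
    (f : E → E) (u0 : E) (H : ℕ → Ω → ℝ) : ℕ → Ω → E
  | 0, _ => u0
  | (k + 1), ω => eulerChain f u0 H k ω + H k ω • f (eulerChain f u0 H k ω)

/-- The stochastic Euler dynamics path
`V(t) = V̂_{K(t)} + (t − T_{K(t)}) f(V̂_{K(t)})`. -/
noncomputable def eulerPath {Ω E : Type*} [AddCommGroup E] [Module ℝ E]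
    (f : E → E) (u0 : E) (H : ℕ → Ω → ℝ) (t : ℝ) (ω : Ω) : E :=
  eulerChain f u0 H (jumpCount H t ω) ω +
    (t - jumpTime H (jumpCount H t ω) ω) • f (eulerChain f u0 H (jumpCount H t ω) ω)

/-! ### Auxiliary lemmas -/

section NormLemmas

variable {E : Type*} [NormedAddCommGroup E] [NormedSpace ℝ E] [CompleteSpace E]

omit [CompleteSpace E] in
lemma myNormPowLe (x : E →L[ℝ] E) : ∀ n : ℕ, ‖x ^ n‖ ≤ ‖x‖ ^ n := by
  intro n
  cases n with
  | zero => simpa [ContinuousLinearMap.one_def] using ContinuousLinearMap.norm_id_le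
  | succ m => exact norm_pow_le' x m.succ_pos

lemma myNormExpLe (x : E →L[ℝ] E) : ‖NormedSpace.exp x‖ ≤ Real.exp ‖x‖ := by
  rw [NormedSpace.exp_eq_tsum ℝ, Real.exp_eq_exp_ℝ, NormedSpace.exp_eq_tsum_div]
  refine le_trans (norm_tsum_le_tsum_norm (NormedSpace.norm_expSeries_summable' x)) ?_
  refine Summable.tsum_le_tsum (fun n => ?_) (NormedSpace.norm_expSeries_summable' x)
    (Real.summable_pow_div_factorial ‖x‖)
  rw [norm_smul ((n.factorial : ℝ))⁻¹ (x ^ n), norm_inv, Real.norm_natCast, div_eq_inv_mul]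
  exact mul_le_mul_of_nonneg_left (myNormPowLe x n) (by positivity)

lemma myExpRemainder (x : E →L[ℝ] E) :
    ‖NormedSpace.exp x - 1 - x‖ ≤ ‖x‖ ^ 2 * Real.exp ‖x‖ := by
  have hs := NormedSpace.expSeries_summable' (𝕂 := ℝ) x
  have hsn := NormedSpace.norm_expSeries_summable' (𝕂 := ℝ) x
  have h2 : NormedSpace.exp x - 1 - x = ∑' n : ℕ, (((n + 2).factorial : ℝ))⁻¹ • x ^ (n + 2) := by
    have h := Summable.sum_add_tsum_nat_add (f := fun n : ℕ => ((n.factorial : ℝ))⁻¹ • x ^ n) 2 hs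
    simp only [Finset.sum_range_succ, Finset.sum_range_zero] at h
    have hexp : NormedSpace.exp x = ∑' n : ℕ, ((n.factorial : ℝ))⁻¹ • x ^ n := by
      rw [NormedSpace.exp_eq_tsum ℝ]
    rw [hexp, ← h]
    norm_num [Nat.factorial]
    abel
  rw [h2]
  have hsn2 : Summable fun n : ℕ => ‖(((n + 2).factorial : ℝ))⁻¹ • x ^ (n + 2)‖ :=
    (summable_nat_add_iff 2).2 hsn
  refine le_trans (norm_tsum_le_tsum_norm hsn2) ?_
  have hg : Summable fun n : ℕ => ‖x‖ ^ 2 * (‖x‖ ^ n / n.factorial) :=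
    (Real.summable_pow_div_factorial ‖x‖).mul_left _
  refine le_trans (Summable.tsum_le_tsum (fun n => ?_) hsn2 hg) ?_
  · rw [norm_smul ((((n + 2).factorial : ℕ) : ℝ))⁻¹ (x ^ (n + 2)), norm_inv, Real.norm_natCast]
    have h1 : ‖x ^ (n + 2)‖ ≤ ‖x‖ ^ (n + 2) := myNormPowLe x _
    have h2 : ((n.factorial : ℝ))⁻¹ ≥ (((n + 2).factorial : ℝ))⁻¹ := by
      apply inv_anti₀ (by positivity)
      exact_mod_cast Nat.factorial_le (by omega)
    calc (((n + 2).factorial : ℝ))⁻¹ * ‖x ^ (n + 2)‖ ≤ ((n.factorial : ℝ))⁻¹ * ‖x‖ ^ (n + 2) := by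
          apply mul_le_mul h2 h1 (norm_nonneg _) (by positivity)
      _ = ‖x‖ ^ 2 * (‖x‖ ^ n / n.factorial) := by ring
  · rw [tsum_mul_left, Real.exp_eq_exp_ℝ, NormedSpace.exp_eq_tsum_div]

lemma myNormExpSmulLe (B : E →L[ℝ] E) {c : ℝ} (hc : 0 ≤ c) :
    ‖NormedSpace.exp (c • B)‖ ≤ Real.exp (c * ‖B‖) := by
  have := myNormExpLe (c • B)
  rwa [norm_smul c B, Real.norm_eq_abs, abs_of_nonneg hc] at this

lemma myStepBound (B : E →L[ℝ] E) {c : ℝ} (hc : 0 ≤ c) (y z : E) :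
    ‖(y + c • B y) - NormedSpace.exp (c • B) z‖ ≤
      Real.exp (c * ‖B‖) * ‖y - z‖ + c ^ 2 * ‖B‖ ^ 2 * Real.exp (c * ‖B‖) * ‖z‖ := by
  set R : E →L[ℝ] E := NormedSpace.exp (c • B) - 1 - c • B with hR
  have hexp : NormedSpace.exp (c • B) z = z + c • B z + R z := by
    simp [hR, ContinuousLinearMap.sub_apply, ContinuousLinearMap.smul_apply,
      ContinuousLinearMap.one_apply]
  have hre : (y + c • B y) - NormedSpace.exp (c • B) z
      = ((y - z) + c • B (y - z)) - R z := by
    rw [hexp, map_sub, smul_sub]; abel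
  have hRnorm : ‖R‖ ≤ c ^ 2 * ‖B‖ ^ 2 * Real.exp (c * ‖B‖) := by
    have := myExpRemainder (c • B)
    rwa [norm_smul c B, Real.norm_eq_abs, abs_of_nonneg hc, mul_pow] at this
  calc ‖(y + c • B y) - NormedSpace.exp (c • B) z‖
      ≤ ‖(y - z) + c • B (y - z)‖ + ‖R z‖ := by rw [hre]; exact norm_sub_le _ _
    _ ≤ (‖y - z‖ + c * ‖B‖ * ‖y - z‖) + ‖R‖ * ‖z‖ := by
        gcongr
        · refine le_trans (norm_add_le _ _) ?_
          gcongr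
          rw [norm_smul c (B (y - z)), Real.norm_eq_abs, abs_of_nonneg hc, mul_assoc]
          gcongr
          exact B.le_opNorm _
        · exact R.le_opNorm _
    _ ≤ Real.exp (c * ‖B‖) * ‖y - z‖ + c ^ 2 * ‖B‖ ^ 2 * Real.exp (c * ‖B‖) * ‖z‖ := by
        have h1 : 1 + c * ‖B‖ ≤ Real.exp (c * ‖B‖) := by
          have := Real.add_one_le_exp (c * ‖B‖); linarith
        have h2 : ‖R‖ * ‖z‖ ≤ c ^ 2 * ‖B‖ ^ 2 * Real.exp (c * ‖B‖) * ‖z‖ :=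
          mul_le_mul_of_nonneg_right hRnorm (norm_nonneg z)
        nlinarith [norm_nonneg (y - z), mul_nonneg hc (norm_nonneg B)]

end NormLemmas

/-! ### Jump time lemmas -/

lemma jumpTime_zero' {Ω : Type*} (H : ℕ → Ω → ℝ) (ω : Ω) : jumpTime H 0 ω = 0 :=
  Finset.sum_range_zero _

lemma jumpTime_succ' {Ω : Type*} (H : ℕ → Ω → ℝ) (n : ℕ) (ω : Ω) :
    jumpTime H (n + 1) ω = jumpTime H n ω + H n ω := Finset.sum_range_succ _ _

lemma jumpTime_nonneg' {Ω : Type*} {H : ℕ → Ω → ℝ} {n : ℕ} {ω : Ω}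
    (h : ∀ i < n, 0 ≤ H i ω) : 0 ≤ jumpTime H n ω :=
  Finset.sum_nonneg fun i hi => h i (Finset.mem_range.1 hi)

lemma exp_smul_add_apply {E : Type*} [NormedAddCommGroup E] [NormedSpace ℝ E] [CompleteSpace E]
    (B : E →L[ℝ] E) (a b : ℝ) (x : E) :
    NormedSpace.exp ((a + b) • B) x =
      NormedSpace.exp (a • B) (NormedSpace.exp (b • B) x) := by
  have hcomm : Commute (a • B) (b • B) := ((Commute.refl B).smul_left a).smul_right b
  letI : NormedAlgebra ℚ (E →L[ℝ] E) := NormedAlgebra.restrictScalars ℚ ℝ _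
  rw [show (a + b) • B = a • B + b • B from add_smul a b B,
    NormedSpace.exp_add_of_commute hcomm]
  simp [ContinuousLinearMap.mul_apply]

lemma myChainErr {E : Type*} [NormedAddCommGroup E] [NormedSpace ℝ E] [CompleteSpace E]
    {Ω : Type*} (B : E →L[ℝ] E) (x0 : E) (H : ℕ → Ω → ℝ) (ω : Ω) :
    ∀ n : ℕ, (∀ i < n, 0 ≤ H i ω) →
      ‖eulerChain ⇑B x0 H n ω - NormedSpace.exp (jumpTime H n ω • B) x0‖ ≤
        ‖B‖ ^ 2 * Real.exp (jumpTime H n ω * ‖B‖) *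
          (∑ i ∈ Finset.range n, H i ω ^ 2) * ‖x0‖ := by
  intro n
  induction n with
  | zero =>
      intro _
      simp [eulerChain, jumpTime, NormedSpace.exp_zero]
  | succ n ih =>
      intro hpos
      have hc : 0 ≤ H n ω := hpos n (by omega)
      have hprev : ∀ i < n, 0 ≤ H i ω := fun i hi => hpos i (by omega)
      have ht : 0 ≤ jumpTime H n ω := jumpTime_nonneg' hprev
      set t := jumpTime H n ω with htdef
      set c := H n ω with hcdef
      set y := eulerChain ⇑B x0 H n ω with hy
      set z := NormedSpace.exp (t • B) x0 with hz
      have hsplit : NormedSpace.exp (jumpTime H (n + 1) ω • B) x0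
          = NormedSpace.exp (c • B) z := by
        rw [jumpTime_succ']
        have hcomm : Commute (c • B) (t • B) :=
          ((Commute.refl B).smul_left c).smul_right t
        letI : NormedAlgebra ℚ (E →L[ℝ] E) := NormedAlgebra.restrictScalars ℚ ℝ _
        rw [show (t + c) • B = c • B + t • B by rw [add_smul, add_comm],
          NormedSpace.exp_add_of_commute hcomm]
        simp [hz, ContinuousLinearMap.mul_apply]
      have hchain : eulerChain ⇑B x0 H (n + 1) ω = y + c • B y := rfl
      have hznorm : ‖z‖ ≤ Real.exp (t * ‖B‖) * ‖x0‖ := by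
        refine le_trans ((NormedSpace.exp (t • B)).le_opNorm x0) ?_
        gcongr
        exact myNormExpSmulLe B ht
      have step := myStepBound B hc y z
      have ihh := ih hprev
      calc ‖eulerChain ⇑B x0 H (n + 1) ω - NormedSpace.exp (jumpTime H (n + 1) ω • B) x0‖
          = ‖(y + c • B y) - NormedSpace.exp (c • B) z‖ := by rw [hchain, hsplit]
        _ ≤ Real.exp (c * ‖B‖) * ‖y - z‖ + c ^ 2 * ‖B‖ ^ 2 * Real.exp (c * ‖B‖) * ‖z‖ := step
        _ ≤ Real.exp (c * ‖B‖) * (‖B‖ ^ 2 * Real.exp (t * ‖B‖) *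
              (∑ i ∈ Finset.range n, H i ω ^ 2) * ‖x0‖)
            + c ^ 2 * ‖B‖ ^ 2 * Real.exp (c * ‖B‖) * (Real.exp (t * ‖B‖) * ‖x0‖) := by
            gcongr
        _ = ‖B‖ ^ 2 * Real.exp (jumpTime H (n + 1) ω * ‖B‖) *
              (∑ i ∈ Finset.range (n + 1), H i ω ^ 2) * ‖x0‖ := by
            rw [jumpTime_succ', Finset.sum_range_succ, add_mul, Real.exp_add, ← htdef, ← hcdef]
            ring

/-! ### Jump count lemmas -/

lemma jumpCount_eq_succ_iff {Ω : Type*} (H : ℕ → Ω → ℝ) {ε : ℝ} (hε : 0 ≤ ε) (ω : Ω) (m : ℕ) :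
    jumpCount H ε ω = m + 1 ↔
      jumpTime H (m + 1) ω ≤ ε ∧ ∀ j, m + 1 < j → ε < jumpTime H j ω := by
  set S : Set ℕ := {k | jumpTime H k ω ≤ ε} with hS
  have h0 : 0 ∈ S := by simp [hS, jumpTime_zero', hε]
  constructor
  · intro hK
    have hbdd : BddAbove S := by
      by_contra hb
      have hinf : S.Infinite := fun hfin => hb (Set.Finite.bddAbove hfin)
      have := Set.Infinite.Nat.sSup_eq_zero hinf
      rw [jumpCount, ← hS] at hK
      omega
    have hmem : m + 1 ∈ S := by
      have := Nat.sSup_mem ⟨0, h0⟩ hbdd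
      rwa [show sSup S = m + 1 from hK] at this
    refine ⟨hmem, fun j hj => ?_⟩
    by_contra hle
    push_neg at hle
    have : j ≤ sSup S := le_csSup hbdd hle
    rw [show sSup S = m + 1 from hK] at this
    omega
  · rintro ⟨h1, h2⟩
    have hub : ∀ k ∈ S, k ≤ m + 1 := by
      intro k hk
      by_contra hgt
      push_neg at hgt
      exact absurd hk (not_le.2 (h2 k hgt))
    have hbdd : BddAbove S := ⟨m + 1, hub⟩
    exact le_antisymm (csSup_le ⟨0, h0⟩ hub) (le_csSup hbdd h1)

lemma jumpTime_jumpCount_le {Ω : Type*} {H : ℕ → Ω → ℝ} {ε : ℝ} (hε : 0 ≤ ε) {ω : Ω} {k : ℕ}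
    (hK : jumpCount H ε ω = k) : jumpTime H k ω ≤ ε := by
  cases k with
  | zero => simp [jumpTime_zero', hε]
  | succ m => exact ((jumpCount_eq_succ_iff H hε ω m).mp hK).1

lemma measurable_jumpTime {Ω : Type*} [MeasurableSpace Ω] {H : ℕ → Ω → ℝ}
    (hm : ∀ i, Measurable (H i)) (k : ℕ) : Measurable (jumpTime H k) := by
  unfold jumpTime
  exact Finset.measurable_sum _ fun i _ => hm i

lemma measurableSet_jumpCount_eq {Ω : Type*} [MeasurableSpace Ω] {H : ℕ → Ω → ℝ}
    (hm : ∀ i, Measurable (H i)) {ε : ℝ} (hε : 0 ≤ ε) (k : ℕ) :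
    MeasurableSet {ω | jumpCount H ε ω = k} := by
  have hsucc : ∀ m : ℕ, MeasurableSet {ω | jumpCount H ε ω = m + 1} := by
    intro m
    have heq : {ω | jumpCount H ε ω = m + 1} =
        {ω | jumpTime H (m + 1) ω ≤ ε} ∩ ⋂ j, {ω | m + 1 < j → ε < jumpTime H j ω} := by
      ext ω
      simp only [Set.mem_setOf_eq, Set.mem_inter_iff, Set.mem_iInter,
        jumpCount_eq_succ_iff H hε ω m]
    rw [heq]
    refine (measurableSet_le (measurable_jumpTime hm _) measurable_const).inter
      (MeasurableSet.iInter fun j => ?_)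
    by_cases hj : m + 1 < j
    · simp only [hj, true_implies]
      exact measurableSet_lt measurable_const (measurable_jumpTime hm _)
    · simp only [hj, false_implies, Set.setOf_true]
      exact MeasurableSet.univ
  cases k with
  | succ m => exact hsucc m
  | zero =>
      have heq : {ω | jumpCount H ε ω = 0} = (⋃ m, {ω | jumpCount H ε ω = m + 1})ᶜ := by
        ext ω
        simp only [Set.mem_setOf_eq, Set.mem_compl_iff, Set.mem_iUnion]
        constructor
        · rintro h ⟨m, hm'⟩; omega
        · intro h'
          by_contra h0
          exact h' ⟨jumpCount H ε ω - 1, by omega⟩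
      rw [heq]
      exact (MeasurableSet.iUnion fun m => hsucc m).compl

/-! ### Exponential distribution lemmas -/

lemma expMeasure_Iio_zero (r : ℝ) : expMeasure r (Set.Iio 0) = 0 := by
  rw [expMeasure, gammaMeasure, withDensity_apply _ measurableSet_Iio]
  exact lintegral_gammaPDF_of_nonpos le_rfl

lemma ae_nonneg_of_expMeasure {Ω : Type*} [MeasurableSpace Ω] (P : Measure Ω)
    {X : Ω → ℝ} (hX : Measurable X) {r : ℝ} (hd : Measure.map X P = expMeasure r) :
    ∀ᵐ ω ∂P, 0 ≤ X ω := by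
  rw [ae_iff]
  have : {ω | ¬ 0 ≤ X ω} = X ⁻¹' Set.Iio 0 := by
    ext ω; simp [not_le]
  rw [this, ← Measure.map_apply hX measurableSet_Iio, hd, expMeasure_Iio_zero]

/-! ### Transfer to Euclidean space -/

/-- Transfer `ℝ^d` to `EuclideanSpace`. -/
noncomputable def eE {d : ℕ} (x : Fin d → ℝ) : EuclideanSpace ℝ (Fin d) :=
  (WithLp.equiv 2 (Fin d → ℝ)).symm x

variable {d : ℕ}

lemma eE_mulVec (M : Matrix (Fin d) (Fin d) ℝ) (x : Fin d → ℝ) :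
    eE (M.mulVec x) = Matrix.toEuclideanCLM (𝕜 := ℝ) M (eE x) := by
  rfl

lemma eE_add (x y : Fin d → ℝ) : eE (x + y) = eE x + eE y := rfl
lemma eE_sub (x y : Fin d → ℝ) : eE (x - y) = eE x - eE y := rfl
lemma eE_smul (c : ℝ) (x : Fin d → ℝ) : eE (c • x) = c • eE x := rfl

lemma eucNorm_eq_norm_eE (x : Fin d → ℝ) : eucNorm x = ‖eE x‖ := rfl

lemma eE_chain {Ω : Type*} (A : Matrix (Fin d) (Fin d) ℝ) (u0 : Fin d → ℝ)
    (H : ℕ → Ω → ℝ) (ω : Ω) (k : ℕ) :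
    eE (eulerChain A.mulVec u0 H k ω) =
      eulerChain ⇑(Matrix.toEuclideanCLM (𝕜 := ℝ) A) (eE u0) H k ω := by
  induction k with
  | zero => rfl
  | succ n ih =>
      show eE (eulerChain A.mulVec u0 H n ω + H n ω • A.mulVec (eulerChain A.mulVec u0 H n ω)) = _
      rw [eE_add, eE_smul, eE_mulVec, ih]
      rfl

lemma eE_path {Ω : Type*} (A : Matrix (Fin d) (Fin d) ℝ) (u0 : Fin d → ℝ)
    (H : ℕ → Ω → ℝ) (ε : ℝ) (ω : Ω) :
    eE (eulerPath A.mulVec u0 H ε ω) =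
      eulerPath ⇑(Matrix.toEuclideanCLM (𝕜 := ℝ) A) (eE u0) H ε ω := by
  simp only [eulerPath]
  rw [eE_add, eE_smul, eE_mulVec, eE_chain]

lemma eE_exp' (A : Matrix (Fin d) (Fin d) ℝ) :
    Matrix.toEuclideanCLM (𝕜 := ℝ) (NormedSpace.exp A) =
      NormedSpace.exp (Matrix.toEuclideanCLM (𝕜 := ℝ) A) := by
  letI : NormedRing (Matrix (Fin d) (Fin d) ℝ) := Matrix.linftyOpNormedRing
  letI : NormedAlgebra ℝ (Matrix (Fin d) (Fin d) ℝ) := Matrix.linftyOpNormedAlgebra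
  letI : NormedAlgebra ℚ (Matrix (Fin d) (Fin d) ℝ) := NormedAlgebra.restrictScalars ℚ ℝ _
  set ψ := (Matrix.toEuclideanCLM (𝕜 := ℝ) (n := Fin d)).toRingEquiv with hψdef
  have hψ : ⇑ψ = ⇑(Matrix.toEuclideanCLM (𝕜 := ℝ) (n := Fin d)) := rfl
  have hcont : Continuous ⇑ψ := by
    rw [hψ]
    have hlin : IsLinearMap ℝ ⇑(Matrix.toEuclideanCLM (𝕜 := ℝ) (n := Fin d)) :=
      ⟨fun a b => map_add _ a b, fun c a => map_smul _ c a⟩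
    exact LinearMap.continuous_of_finiteDimensional (IsLinearMap.mk' _ hlin)
  have h := NormedSpace.map_exp ψ hcont A
  rw [hψ] at h
  exact h

/-- Conditional local root mean square truncation error of the stochastic Euler dynamics for
`u' = Au`: for every `k ∈ ℕ₀` there is `C_k > 0` with
`𝔼[‖V(ε) − exp(εA)u₀‖²·1{K(ε)=k}] ≤ C_k ε⁴ ℙ(K(ε)=k)` for all `ε ∈ (0,1)`. -/
theorem stmt10 {d : ℕ} {Ω : Type*} [MeasurableSpace Ω] (P : Measure Ω) [IsProbabilityMeasure P]
    (A : Matrix (Fin d) (Fin d) ℝ) (u0 : Fin d → ℝ) (h : ℝ) (hh : 0 < h)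
    (H : ℕ → Ω → ℝ) (hHmeas : ∀ k, Measurable (H k))
    (hHindep : iIndepFun H P)
    (hHdist : ∀ k, Measure.map (H k) P = expMeasure h⁻¹) :
    ∀ k : ℕ, ∃ C > (0 : ℝ), ∀ ε : ℝ, 0 < ε → ε < 1 →
      ∫ ω in {ω | jumpCount H ε ω = k},
          eucNorm (eulerPath A.mulVec u0 H ε ω - (NormedSpace.exp (ε • A)).mulVec u0) ^ 2 ∂P
        ≤ C * ε ^ 4 * (P {ω | jumpCount H ε ω = k}).toReal := by
  intro k
  set B := Matrix.toEuclideanCLM (𝕜 := ℝ) A with hBdef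
  set x0 : EuclideanSpace ℝ (Fin d) := eE u0 with hx0def
  set K0 : ℝ := 2 * ‖B‖ ^ 2 * Real.exp ‖B‖ * ‖x0‖ with hK0def
  have hK0nn : 0 ≤ K0 := by positivity
  refine ⟨K0 ^ 2 + 1, by positivity, fun ε hε hε1 => ?_⟩
  set s := {ω | jumpCount H ε ω = k} with hsdef
  have hsm : MeasurableSet s := measurableSet_jumpCount_eq hHmeas hε.le k
  have hG : ∀ᵐ ω ∂P, ∀ i, 0 ≤ H i ω :=
    ae_all_iff.mpr fun i => ae_nonneg_of_expMeasure P (hHmeas i) (hHdist i)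
  have hptws : ∀ᵐ ω ∂P, ω ∈ s →
      ‖eucNorm (eulerPath A.mulVec u0 H ε ω - (NormedSpace.exp (ε • A)).mulVec u0) ^ 2‖
        ≤ K0 ^ 2 * ε ^ 4 := by
    filter_upwards [hG] with ω hω hωs
    have hKc : jumpCount H ε ω = k := hωs
    have hHnn : ∀ i < k, 0 ≤ H i ω := fun i _ => hω i
    have hT : jumpTime H k ω ≤ ε := jumpTime_jumpCount_le hε.le hKc
    have hTnn : 0 ≤ jumpTime H k ω := jumpTime_nonneg' hHnn
    set T := jumpTime H k ω with hTdef
    set r := ε - T with hrdef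
    have hr : 0 ≤ r := by simp [hrdef]; linarith
    have hrε : r ≤ ε := by simp [hrdef]; linarith
    set y := eulerChain ⇑B x0 H k ω with hydef
    set z := NormedSpace.exp (T • B) x0 with hzdef
    -- translate to Euclidean space
    have h2 : eE ((NormedSpace.exp (ε • A)).mulVec u0) = NormedSpace.exp (ε • B) x0 := by
      rw [eE_mulVec, eE_exp', _root_.map_smul]
    have htrans : eucNorm (eulerPath A.mulVec u0 H ε ω - (NormedSpace.exp (ε • A)).mulVec u0)
        = ‖eulerPath ⇑B x0 H ε ω - NormedSpace.exp (ε • B) x0‖ := by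
      rw [eucNorm_eq_norm_eE, eE_sub, eE_path, h2]
    -- the path on the event
    have hpathE : eulerPath ⇑B x0 H ε ω = y + r • B y := by
      simp only [eulerPath, hKc]; rfl
    have h3 : r + T = ε := by rw [hrdef]; ring
    have hsplit : NormedSpace.exp (ε • B) x0 = NormedSpace.exp (r • B) z := by
      rw [← h3]
      exact exp_smul_add_apply B r T x0
    have hznorm : ‖z‖ ≤ Real.exp (T * ‖B‖) * ‖x0‖ := by
      refine le_trans ((NormedSpace.exp (T • B)).le_opNorm x0) ?_
      gcongr
      exact myNormExpSmulLe B hTnn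
    have hchain := myChainErr B x0 H ω k hHnn
    rw [← hTdef, ← hydef, ← hzdef] at hchain
    have hQ : (∑ i ∈ Finset.range k, H i ω ^ 2) ≤ ε ^ 2 := by
      refine le_trans (Finset.sum_sq_le_sq_sum_of_nonneg
        (fun i hi => hHnn i (Finset.mem_range.1 hi))) ?_
      have : (∑ i ∈ Finset.range k, H i ω) = T := rfl
      rw [this]
      exact pow_le_pow_left₀ hTnn hT 2
    have hr2 : r ^ 2 ≤ ε ^ 2 := pow_le_pow_left₀ hr hrε 2
    have hQnn : 0 ≤ ∑ i ∈ Finset.range k, H i ω ^ 2 :=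
      Finset.sum_nonneg fun i _ => sq_nonneg _
    have hee : Real.exp (ε * ‖B‖) ≤ Real.exp ‖B‖ :=
      Real.exp_le_exp.2 (by nlinarith [norm_nonneg B])
    have hmain : ‖eulerPath ⇑B x0 H ε ω - NormedSpace.exp (ε • B) x0‖ ≤ K0 * ε ^ 2 := by
      calc ‖eulerPath ⇑B x0 H ε ω - NormedSpace.exp (ε • B) x0‖
          = ‖(y + r • B y) - NormedSpace.exp (r • B) z‖ := by rw [hpathE, hsplit]
        _ ≤ Real.exp (r * ‖B‖) * ‖y - z‖ + r ^ 2 * ‖B‖ ^ 2 * Real.exp (r * ‖B‖) * ‖z‖ :=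
            myStepBound B hr y z
        _ ≤ Real.exp (r * ‖B‖) * (‖B‖ ^ 2 * Real.exp (T * ‖B‖) *
              (∑ i ∈ Finset.range k, H i ω ^ 2) * ‖x0‖)
            + r ^ 2 * ‖B‖ ^ 2 * Real.exp (r * ‖B‖) * (Real.exp (T * ‖B‖) * ‖x0‖) := by
            gcongr
        _ = ‖B‖ ^ 2 * Real.exp (ε * ‖B‖) *
              ((∑ i ∈ Finset.range k, H i ω ^ 2) + r ^ 2) * ‖x0‖ := by
            rw [show ε * ‖B‖ = r * ‖B‖ + T * ‖B‖ by rw [hrdef]; ring, Real.exp_add]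
            ring
        _ ≤ ‖B‖ ^ 2 * Real.exp ‖B‖ * (ε ^ 2 + ε ^ 2) * ‖x0‖ := by
            gcongr
        _ = K0 * ε ^ 2 := by rw [hK0def]; ring
    rw [htrans]
    have hnn : 0 ≤ ‖eulerPath ⇑B x0 H ε ω - NormedSpace.exp (ε • B) x0‖ := norm_nonneg _
    rw [Real.norm_of_nonneg (by positivity)]
    calc ‖eulerPath ⇑B x0 H ε ω - NormedSpace.exp (ε • B) x0‖ ^ 2
        ≤ (K0 * ε ^ 2) ^ 2 := pow_le_pow_left₀ hnn hmain 2
      _ = K0 ^ 2 * ε ^ 4 := by ring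
  calc ∫ ω in s,
        eucNorm (eulerPath A.mulVec u0 H ε ω - (NormedSpace.exp (ε • A)).mulVec u0) ^ 2 ∂P
      ≤ ‖∫ ω in s,
          eucNorm (eulerPath A.mulVec u0 H ε ω - (NormedSpace.exp (ε • A)).mulVec u0) ^ 2 ∂P‖ :=
        le_abs_self _
    _ ≤ K0 ^ 2 * ε ^ 4 * (P s).toReal :=
        norm_setIntegral_le_of_norm_le_const_ae' (measure_lt_top P s) hptws
    _ ≤ (K0 ^ 2 + 1) * ε ^ 4 * (P s).toReal := by
        have h1 : (0 : ℝ) ≤ (P s).toReal := ENNReal.toReal_nonneg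
        have h2 : (0 : ℝ) ≤ ε ^ 4 := by positivity
        nlinarith
end
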